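/- arXiv:2605.07595 — 2 statements merged into one kernel-verified Lean document; each statement's English description precedes it below -/
import Mathlib

section
/- Let q be a prime power, let a, b ∈ 𝔽_q^n with b ≠ 0, and let ℓ = {a + α b : α ∈ 𝔽_q} ⊆ 𝔽_q^n. Let 0 ≤ E ≤ E⁺ ≤ n be integers. If ℓ is not contained in the Hamming ball B_{E⁺}, then |ℓ ∩ B_E| ≤ (E⁺ + 1)/(E⁺ − E + 1). In particular, when E⁺ = E, if ℓ ⊄ B_E then |ℓ ∩ B_E| ≤ E + 1. -/
/-- The Hamming ball of radius `E` in `F^n`. -/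
def hamBall (F : Type) [Field F] [DecidableEq F] (n E : ℕ) : Set (Fin n → F) :=
  {x | hammingNorm x ≤ E}

/-- The affine line `{a + α b : α ∈ F}` in `F^n`. -/
def affLine {F : Type} [Field F] {n : ℕ} (a b : Fin n → F) : Set (Fin n → F) :=
  {t | ∃ α : F, t = a + α • b}

/-!
Let `x₀ = a + α₀ b` have weight `w > E⁺`. A coordinate in the support of `x₀` vanishes on at
most one point of the line, while each point of weight `≤ E` vanishes on at least `w - E` of
these coordinates. Double counting gives `k (w - E) ≤ w` for the number `k` of such points, and
since `w ↦ w / (w - E)` decreases, `k (E⁺ + 1 - E) ≤ E⁺ + 1`.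
-/

open Finset

theorem hammingNorm_sub_hammingNorm_le {ι : Type*} [Fintype ι] {β : ι → Type*}
    [∀ i, Zero (β i)] [∀ i, DecidableEq (β i)] (x y : ∀ i, β i) :
    hammingNorm x - hammingNorm y ≤ #{i | x i ≠ 0 ∧ y i = 0} := by
  classical
  have hsub : univ.filter (x · ≠ 0) ⊆
      univ.filter (fun i => x i ≠ 0 ∧ y i = 0) ∪ univ.filter (y · ≠ 0) := by
    intro i
    simp only [mem_union, mem_filter, mem_univ, true_and]
    tauto
  have := (card_le_card hsub).trans (card_union_le _ _)
  unfold hammingNorm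
  omega

theorem Set.ncard_mul_le_of_forall_finset {α : Type*} {s : Set α} {m N : ℕ} (hm : 0 < m)
    (h : ∀ t : Finset α, ↑t ⊆ s → #t * m ≤ N) : s.ncard * m ≤ N := by
  have hfin : s.Finite := by
    by_contra hinf
    obtain ⟨t, hts, hcard⟩ := Set.Infinite.exists_subset_card_eq hinf (N + 1)
    have := h t hts
    rw [hcard] at this
    nlinarith
  simpa [Set.ncard_eq_toFinset_card s hfin] using h hfin.toFinset (by simp)

theorem Nat.mul_sub_le_of_mul_sub_le {k s E p : ℕ} (h : k * (s - E) ≤ s) (hEp : E ≤ p)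
    (hps : p < s) : k * (p + 1 - E) ≤ p + 1 := by
  rcases Nat.eq_zero_or_pos k with rfl | hk
  · simp
  · have : k * (s - E) = k * (p + 1 - E) + k * (s - (p + 1)) := by
      rw [← mul_add]; congr 1; omega
    have : s - (p + 1) ≤ k * (s - (p + 1)) := Nat.le_mul_of_pos_left _ hk
    omega

section Line

variable {ι F : Type*} [Field F]

theorem eq_of_line_apply_eq_zero {a b : ι → F} {α₀ α β : F} {i : ι}
    (h₀ : (a + α₀ • b) i ≠ 0) (hα : (a + α • b) i = 0) (hβ : (a + β • b) i = 0) :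
    α = β := by
  simp only [Pi.add_apply, Pi.smul_apply, smul_eq_mul] at h₀ hα hβ
  have hb : b i ≠ 0 := by
    rintro hb
    simp_all
  have : (α - β) * b i = 0 := by linear_combination hα - hβ
  simpa [sub_eq_zero, hb] using this

theorem card_mul_sub_le_hammingNorm [Fintype ι] [DecidableEq F] {a b : ι → F} {α₀ : F}
    {E : ℕ} (s : Finset F) (hs : ∀ α ∈ s, hammingNorm (a + α • b) ≤ E) :
    #s * (hammingNorm (a + α₀ • b) - E) ≤ hammingNorm (a + α₀ • b) := by
  refine (card_mul_le_card_mul (fun α i => (a + α • b) i = 0) (n := 1)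
    (t := {i | (a + α₀ • b) i ≠ 0}) ?_ ?_).trans_eq (mul_one _)
  · intro α hα
    grw [← hs α hα, hammingNorm_sub_hammingNorm_le]
    simp [bipartiteAbove, filter_filter]
  · intro i hi
    refine card_le_one.2 fun α hα β hβ => ?_
    simp only [mem_bipartiteBelow, mem_filter, mem_univ, true_and] at hi hα hβ
    exact eq_of_line_apply_eq_zero hi hα.2 hβ.2

end Line

theorem ncard_affLine_inter {F : Type} [Field F] {n : ℕ} {a b : Fin n → F} (hb : b ≠ 0)
    (s : Set (Fin n → F)) : (affLine a b ∩ s).ncard = {α : F | a + α • b ∈ s}.ncard := by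
  have hinj : Function.Injective fun α : F => a + α • b :=
    (add_right_injective a).comp (smul_left_injective F hb)
  rw [← Set.ncard_image_of_injective _ hinj]
  congr 1
  ext x
  simp only [affLine, Set.mem_inter_iff, Set.mem_ofPred_eq, Set.mem_image]
  constructor
  · rintro ⟨⟨α, rfl⟩, hx⟩
    exact ⟨α, hx, rfl⟩
  · rintro ⟨α, hx, rfl⟩
    exact ⟨⟨α, rfl⟩, hx⟩

theorem stmt_4_general {F : Type} [Field F] [DecidableEq F] {n : ℕ}
    (a b : Fin n → F) (hb : b ≠ 0) (E Ep : ℕ) (hEEp : E ≤ Ep)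
    (hnot : ¬ affLine a b ⊆ hamBall F n Ep) :
    ((affLine a b ∩ hamBall F n E).ncard : ℝ) ≤ ((Ep : ℝ) + 1) / ((Ep : ℝ) - E + 1) ∧
    (Ep = E → (affLine a b ∩ hamBall F n E).ncard ≤ E + 1) := by
  obtain ⟨_, ⟨α₀, rfl⟩, hα₀⟩ := Set.not_subset.1 hnot
  have hcard : (affLine a b ∩ hamBall F n E).ncard * (Ep + 1 - E) ≤ Ep + 1 := by
    rw [ncard_affLine_inter hb]
    refine Set.ncard_mul_le_of_forall_finset (by omega) fun t ht => ?_
    exact Nat.mul_sub_le_of_mul_sub_le (card_mul_sub_le_hammingNorm t ht) hEEp (not_le.1 hα₀)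
  refine ⟨?_, ?_⟩
  · rw [le_div_iff₀ (by linarith [(Nat.cast_le (α := ℝ)).2 hEEp])]
    have hcard' := (Nat.cast_le (α := ℝ)).2 hcard
    push_cast [Nat.cast_sub (by omega : E ≤ Ep + 1)] at hcard'
    linarith
  · rintro rfl
    simpa using hcard

/-- If an affine line is not contained in `B_{E⁺}`, then it meets `B_E` in at most
`(E⁺+1)/(E⁺−E+1)` points; in particular when `E⁺ = E`, in at most `E+1` points. -/
theorem stmt_4 {F : Type} [Field F] [Fintype F] [DecidableEq F] {n : ℕ}
    (a b : Fin n → F) (hb : b ≠ 0) (E Ep : ℕ) (hEEp : E ≤ Ep) (hEpn : Ep ≤ n)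
    (hnot : ¬ affLine a b ⊆ hamBall F n Ep) :
    ((affLine a b ∩ hamBall F n E).ncard : ℝ) ≤ ((Ep : ℝ) + 1) / ((Ep : ℝ) - E + 1) ∧
    (Ep = E → (affLine a b ∩ hamBall F n E).ncard ≤ E + 1) :=
  stmt_4_general a b hb E Ep hEEp hnot
end

section
/- Let q be a prime power, m ≥ 1, and u₀, u₁, …, u_m ∈ 𝔽_q^n. Let U = {u₀ + Σ_{j=1}^{m} α_j u_j : (α₁,…,α_m) ∈ 𝔽_q^m} ⊆ 𝔽_q^n and Supp(U) := ⋃_{u∈U} supp(u). Let 0 ≤ E ≤ E⁺ ≤ n. If |Supp(U)| > E⁺, then |U ∩ B_E| ≤ ((E⁺ + 1)/(E⁺ − E + 1))·q^{m−1}. -/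
/-- The affine space `u₀ + span(u₁,…,u_m)` as the set of all `u₀ + Σ α_j u_j`. -/
def affSpace {F : Type} [Field F] {n m : ℕ} (u₀ : Fin n → F) (u : Fin m → Fin n → F) :
    Set (Fin n → F) :=
  {v | ∃ α : Fin m → F, v = u₀ + ∑ j, α j • u j}

/-!
Parametrise the affine space by `α ↦ u₀ + ∑ α_j u_j` and fix `E⁺ + 1` coordinates `S` in its
support. Each coordinate in `S` is an affine functional on `𝔽_q^m` that is not identically zero,
so it vanishes at no more than `q^{m-1}` parameters, while a parameter whose point has weight at
most `E` vanishes on at least `E⁺ + 1 - E` coordinates of `S`. Double counting the vanishing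
pairs gives `#{α | wt ≤ E} · (E⁺ + 1 - E) ≤ (E⁺ + 1) q^{m-1}`.
-/

open Finset Module

section

variable {F V : Type*} [Field F] [Fintype F] [DecidableEq F] [AddCommGroup V] [Module F V]
  [Fintype V]

theorem AffineMap.card_filter_eq_zero_le (f : V →ᵃ[F] F) (hf : ∃ x, f x ≠ 0) :
    #{x | f x = 0} ≤ Fintype.card F ^ (finrank F V - 1) := by
  classical
  by_cases hzero : ∀ x, f x ≠ 0
  · simp [hzero]
  obtain ⟨x₀, hx₀⟩ := not_forall_not.mp hzero
  have hsub : ∀ x, f.linear (x - x₀) = f x := fun x => by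
    simpa [hx₀] using f.linearMap_vsub x x₀
  have hlin : f.linear ≠ 0 := by
    obtain ⟨x, hx⟩ := hf
    exact fun h => hx (by simpa [h] using (hsub x).symm)
  calc #{x | f x = 0} ≤ #{y | f.linear y = 0} :=
        card_le_card_of_injOn (· - x₀) (fun x hx => by simpa [hsub] using hx)
          sub_left_injective.injOn
    _ = Fintype.card (LinearMap.ker f.linear) := by
        rw [Fintype.card_subtype]; simp
    _ = Fintype.card F ^ (finrank F V - 1) := by
        rw [card_eq_pow_finrank (K := F) (V := LinearMap.ker f.linear),
          ← Dual.finrank_ker_add_one_of_ne_zero hlin, Nat.add_sub_cancel]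

theorem AffineMap.card_filter_hammingNorm_le_mul_le {ι : Type*} [Fintype ι]
    (Φ : V →ᵃ[F] ι → F) (S : Finset ι) (hS : ∀ i ∈ S, ∃ x, Φ x i ≠ 0) (E : ℕ) :
    #{x | hammingNorm (Φ x) ≤ E} * (#S - E) ≤ #S * Fintype.card F ^ (finrank F V - 1) := by
  rw [← smul_eq_mul, ← smul_eq_mul]
  refine card_nsmul_le_card_nsmul (R := ℕ) (fun x i => Φ x i = 0) (fun x hx => ?_) (fun i hi => ?_)
  · have hwt : #{i ∈ S | ¬Φ x i = 0} ≤ E :=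
      (card_le_card (filter_subset_filter _ (subset_univ S))).trans (mem_filter.1 hx).2
    have := card_filter_add_card_filter_not (s := S) (fun i => Φ x i = 0)
    rw [bipartiteAbove, Nat.cast_id]
    omega
  · exact (card_le_card (filter_subset_filter _ (subset_univ _))).trans
      (((LinearMap.proj i : (ι → F) →ₗ[F] F).toAffineMap.comp Φ).card_filter_eq_zero_le (hS i hi))

end

section

variable {F : Type} [Field F] {n m : ℕ}

def affSpaceParam (u₀ : Fin n → F) (u : Fin m → Fin n → F) : (Fin m → F) →ᵃ[F] Fin n → F :=
  (Fintype.linearCombination F u).toAffineMap + AffineMap.const F (Fin m → F) u₀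

theorem affSpaceParam_apply (u₀ : Fin n → F) (u : Fin m → Fin n → F) (α : Fin m → F) :
    affSpaceParam u₀ u α = u₀ + ∑ j, α j • u j := by
  simp [affSpaceParam, Fintype.linearCombination_apply, add_comm]

theorem affSpace_inter_hamBall_eq_image [DecidableEq F] (u₀ : Fin n → F) (u : Fin m → Fin n → F)
    (E : ℕ) : affSpace u₀ u ∩ hamBall F n E =
      affSpaceParam u₀ u '' {α | hammingNorm (affSpaceParam u₀ u α) ≤ E} := by
  ext v
  simp only [affSpace, hamBall, affSpaceParam_apply]
  aesop

end

theorem stmt_14_general {F : Type} [Field F] [Fintype F] [DecidableEq F] {n : ℕ}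
    (m : ℕ) (u₀ : Fin n → F) (u : Fin m → Fin n → F)
    (E Ep : ℕ) (hEEp : E ≤ Ep)
    (hsupp : Ep < (⋃ v ∈ affSpace u₀ u, {i : Fin n | v i ≠ 0}).ncard) :
    ((affSpace u₀ u ∩ hamBall F n E).ncard : ℝ) ≤
      ((Ep : ℝ) + 1) / ((Ep : ℝ) - E + 1) * (Fintype.card F : ℝ) ^ (m - 1) := by
  set Φ := affSpaceParam u₀ u
  obtain ⟨t, ht, htcard⟩ := Set.exists_subset_card_eq hsupp
  have hS : ∀ i ∈ t.toFinite.toFinset, ∃ α, Φ α i ≠ 0 := by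
    intro i hi
    obtain ⟨_, ⟨α, rfl⟩, hα⟩ : ∃ v ∈ affSpace u₀ u, v i ≠ 0 := by
      simpa using ht ((Set.Finite.mem_toFinset _).1 hi)
    exact ⟨α, by simpa [Φ, affSpaceParam_apply] using hα⟩
  have hcount := Φ.card_filter_hammingNorm_le_mul_le _ hS E
  rw [← Set.ncard_eq_toFinset_card t, htcard, finrank_fin_fun] at hcount
  have hN : (affSpace u₀ u ∩ hamBall F n E).ncard ≤ #{α | hammingNorm (Φ α) ≤ E} := by
    rw [affSpace_inter_hamBall_eq_image, ← Finset.coe_filter_univ]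
    exact (Set.ncard_image_le (Finset.finite_toSet _)).trans (Set.ncard_coe_finset _).le
  have hden : (0 : ℝ) < Ep - E + 1 := by
    have : (E : ℝ) ≤ Ep := by exact_mod_cast hEEp
    linarith
  rw [div_mul_eq_mul_div, le_div_iff₀ hden]
  calc ((affSpace u₀ u ∩ hamBall F n E).ncard : ℝ) * (Ep - E + 1)
      ≤ #{α | hammingNorm (Φ α) ≤ E} * ((Ep + 1 - E : ℕ) : ℝ) := by
        rw [Nat.cast_sub (by omega), Nat.cast_add_one, add_sub_right_comm]
        gcongr
    _ ≤ (Ep + 1) * (Fintype.card F) ^ (m - 1) := by exact_mod_cast hcount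

/-- If the coordinate support of an affine `m`-space exceeds `E⁺`, then the space meets
`B_E` in at most `((E⁺+1)/(E⁺−E+1))·q^{m−1}` points. -/
theorem stmt_14 {F : Type} [Field F] [Fintype F] [DecidableEq F] {n : ℕ}
    (m : ℕ) (hm : 1 ≤ m) (u₀ : Fin n → F) (u : Fin m → Fin n → F)
    (E Ep : ℕ) (hEEp : E ≤ Ep) (hEpn : Ep ≤ n)
    (hsupp : Ep < (⋃ v ∈ affSpace u₀ u, {i : Fin n | v i ≠ 0}).ncard) :
    ((affSpace u₀ u ∩ hamBall F n E).ncard : ℝ) ≤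
      ((Ep : ℝ) + 1) / ((Ep : ℝ) - E + 1) * (Fintype.card F : ℝ) ^ (m - 1) :=
  stmt_14_general m u₀ u E Ep hEEp hsupp
end
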